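/- arXiv:1209.5069 — 4 statements merged into one kernel-verified Lean document; each statement's English description precedes it below -/
import Mathlib

section
/- Let G = (V, E) be a hypergraph. For every natural number x, the number of proper x-colorings of G equals the sum over all edge subsets A ⊆ E of (-1)^{|A|} · x^{k(G[A])}, where k(G[A]) is the number of connected components of the spanning subgraph G[A] = (V, A). Equivalently, the chromatic polynomial satisfies χ(G, x) = Σ_{A ⊆ E} (-1)^{|A|} x^{k(G[A])}. -/
/-!
Inclusion–exclusion over the edges: with `S i` the set of colorings under which the edge `i`
is monochromatic, the proper colorings form `⋂ i, (S i)ᶜ`, so their number is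
`Σ_{A ⊆ E} (-1)^{|A|} |⋂_{i ∈ A} S i|`. A coloring is monochromatic on every edge of `A` iff it is
constant on the connected components of `G[A]`, hence `|⋂_{i ∈ A} S i| = x^{k(G[A])}`.
-/

open scoped Classical

/-- A hypergraph with vertex type `α` and edges indexed by elements of `ι`
(the indexing allows parallel edges, i.e. a multiset of edges). Every edge is a
nonempty subset of the vertex set. -/
structure IdxHypergraph (α ι : Type*) where
  verts : Finset α
  edges : Finset ι
  inc : ι → Finset α
  inc_nonempty : ∀ i ∈ edges, (inc i).Nonempty
  inc_sub : ∀ i ∈ edges, inc i ⊆ verts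

namespace IdxHypergraph

variable {α ι : Type*}

/-- `u` and `v` are connected via a sequence of edges from `E'` in which consecutive
edges share a vertex. -/
def Conn (inc : ι → Finset α) (E' : Finset ι) (u v : α) : Prop :=
  Relation.ReflTransGen (fun a b => ∃ i ∈ E', a ∈ inc i ∧ b ∈ inc i) u v

/-- The number of connected components of the hypergraph with vertex set `V'` and
edge set `E'` (isolated vertices form their own components). -/
noncomputable def numComponents (inc : ι → Finset α) (V' : Finset α) (E' : Finset ι) : ℕ :=
  (V'.image fun v => V'.filter fun u => Conn inc E' u v).card

/-- `(V₁, E₁)` is a subgraph of `(V₂, E₂)` (w.r.t. the incidence function `inc`). -/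
def IsSubgraph (inc : ι → Finset α) (V₁ : Finset α) (E₁ : Finset ι)
    (V₂ : Finset α) (E₂ : Finset ι) : Prop :=
  V₁ ⊆ V₂ ∧ E₁ ⊆ E₂ ∧ ∀ i ∈ E₁, inc i ⊆ V₁

/-- The hypergraph `(V', E')` is δ-cyclic: it has a subgraph with at least one edge
such that deleting any of its edges does not change the number of connected
components. -/
def IsDeltaCyclic (inc : ι → Finset α) (V' : Finset α) (E' : Finset ι) : Prop :=
  ∃ V'' E'', IsSubgraph inc V'' E'' V' E' ∧ E''.Nonempty ∧
    ∀ i ∈ E'', numComponents inc V'' E'' = numComponents inc V'' (E''.erase i)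

/-- The hypergraph `(V', E')` is a δ-cycle: it is δ-cyclic and has no proper
δ-cyclic subgraph. -/
def IsDeltaCycle (inc : ι → Finset α) (V' : Finset α) (E' : Finset ι) : Prop :=
  IsDeltaCyclic inc V' E' ∧
    ∀ V'' E'', IsSubgraph inc V'' E'' V' E' → (V'', E'') ≠ (V', E') →
      ¬ IsDeltaCyclic inc V'' E''

/-- A proper coloring of `G` with colors in `Fin x`: no edge has all its vertices
mapped to the same color. -/
def ProperColoring (G : IdxHypergraph α ι) (x : ℕ) (φ : G.verts → Fin x) : Prop :=
  ∀ i ∈ G.edges, ¬ ∃ c : Fin x, ∀ v : G.verts, (v : α) ∈ G.inc i → φ v = c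

/-- The number of proper `x`-colorings of `G`, i.e. the value `χ(G, x)` of the
chromatic polynomial. -/
noncomputable def chromaticCount (G : IdxHypergraph α ι) (x : ℕ) : ℕ :=
  Nat.card {φ : G.verts → Fin x // G.ProperColoring x φ}

section Order

variable [LinearOrder ι]

/-- `B` is a broken cycle of `G` w.r.t. the linear order on edges: `B` arises from
deleting the maximal edge of (the edge set of) a δ-cycle that is a subgraph of `G`. -/
def IsBrokenCycle (G : IdxHypergraph α ι) (B : Finset ι) : Prop :=
  ∃ V_C E_C e, IsSubgraph G.inc V_C E_C G.verts G.edges ∧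
    IsDeltaCycle G.inc V_C E_C ∧ e ∈ E_C ∧ (∀ i ∈ E_C, i ≤ e) ∧ B = E_C.erase e

/-- The edge `e` closes the broken cycle `B`: `B ∪ {e}` is the edge set of a
δ-cycle in `G`. -/
def Closes (G : IdxHypergraph α ι) (B : Finset ι) (e : ι) : Prop :=
  ∃ V_C, IsSubgraph G.inc V_C (insert e B) G.verts G.edges ∧
    IsDeltaCycle G.inc V_C (insert e B)

/-- `e` is the minimal edge closing the broken cycle `B`, i.e. `e = e(B)`. -/
def IsMinCloser (G : IdxHypergraph α ι) (B : Finset ι) (e : ι) : Prop :=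
  G.Closes B e ∧ ∀ e', G.Closes B e' → e ≤ e'

/-- `e` is the maximal edge closing the broken cycle `B`, i.e. `e = ē(B)`. -/
def IsMaxCloser (G : IdxHypergraph α ι) (B : Finset ι) (e : ι) : Prop :=
  G.Closes B e ∧ ∀ e', G.Closes B e' → e' ≤ e

/-- `A` contains at least one broken cycle, and
`e = m(A) = min { e(B) : B ∈ 𝔅(G, <), B ⊆ A }`. -/
def IsMinClosingEdge (G : IdxHypergraph α ι) (A : Finset ι) (e : ι) : Prop :=
  (∃ B, G.IsBrokenCycle B ∧ B ⊆ A ∧ G.IsMinCloser B e) ∧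
    ∀ B e', G.IsBrokenCycle B → B ⊆ A → G.IsMinCloser B e' → e ≤ e'

end Order

end IdxHypergraph

open Finset

namespace IdxHypergraph

variable {α ι β : Type*}

section Components

variable (inc : ι → Finset α) (V' : Finset α) (E' : Finset ι)

theorem conn_comm {u v : α} : Conn inc E' u v ↔ Conn inc E' v u := by
  have : Std.Symm fun a b => ∃ i ∈ E', a ∈ inc i ∧ b ∈ inc i :=
    ⟨fun _ _ ⟨i, hi, ha, hb⟩ => ⟨i, hi, hb, ha⟩⟩
  exact Std.Symm.iff (r := Relation.ReflTransGen _) _ _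

def connSetoid : Setoid V' where
  r u v := Conn inc E' u v
  iseqv := ⟨fun _ => Relation.ReflTransGen.refl, (conn_comm inc E').1, .trans⟩

theorem filter_conn_eq_filter_conn_iff {u v : α} (hu : u ∈ V') :
    V'.filter (Conn inc E' · u) = V'.filter (Conn inc E' · v) ↔ Conn inc E' u v := by
  refine ⟨fun h => ?_, fun huv => ?_⟩
  · have hu' : u ∈ V'.filter (Conn inc E' · u) := mem_filter.2 ⟨hu, Relation.ReflTransGen.refl⟩
    rw [h] at hu'
    exact (mem_filter.1 hu').2
  · ext w
    simp only [mem_filter, and_congr_right_iff]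
    exact fun _ => ⟨(·.trans huv), (·.trans ((conn_comm inc E').1 huv))⟩

theorem numComponents_eq_card_quotient :
    numComponents inc V' E' = Fintype.card (Quotient (connSetoid inc V' E')) := by
  let component : V' → Finset α := fun v => V'.filter (Conn inc E' · v)
  have hker : connSetoid inc V' E' = Setoid.ker component :=
    Setoid.ext fun u v => (filter_conn_eq_filter_conn_iff inc V' E' u.2).symm
  rw [hker, Fintype.card_congr (Setoid.quotientKerEquivRange component), ← Set.toFinset_card,
    Set.toFinset_range, univ_eq_attach, numComponents]
  congr 1
  ext s
  simp [component]

end Components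

def IsMonochromatic (G : IdxHypergraph α ι) (φ : G.verts → β) (i : ι) : Prop :=
  ∃ c, ∀ v : G.verts, ↑v ∈ G.inc i → φ v = c

variable {G : IdxHypergraph α ι}

theorem forall_isMonochromatic_iff_le_ker {A : Finset ι} (hA : A ⊆ G.edges) (φ : G.verts → β) :
    (∀ i ∈ A, G.IsMonochromatic φ i) ↔ connSetoid G.inc G.verts A ≤ Setoid.ker φ := by
  have mem_verts {i v} (hi : i ∈ A) (hv : v ∈ G.inc i) : v ∈ G.verts := G.inc_sub i (hA hi) hv
  constructor
  · intro hmono u v huv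
    obtain ⟨u, hu⟩ := u
    obtain ⟨v, hv⟩ := v
    change Conn G.inc A u v at huv
    revert hv
    induction huv with
    | refl => exact fun _ => rfl
    | tail _ hstep ih =>
      obtain ⟨i, hi, hw, hv⟩ := hstep
      obtain ⟨c, hc⟩ := hmono i hi
      exact fun hv' => (ih (mem_verts hi hw)).trans ((hc _ hw).trans (hc ⟨_, hv'⟩ hv).symm)
  · intro hker i hi
    obtain ⟨w, hw⟩ := G.inc_nonempty i (hA hi)
    exact ⟨φ ⟨w, mem_verts hi hw⟩, fun v hv => hker (Relation.ReflTransGen.single ⟨i, hi, hv, hw⟩)⟩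

theorem card_forall_isMonochromatic [Fintype β] {A : Finset ι} (hA : A ⊆ G.edges) :
    Fintype.card {φ : G.verts → β // ∀ i ∈ A, G.IsMonochromatic φ i} =
      Fintype.card β ^ numComponents G.inc G.verts A := by
  rw [Fintype.card_congr ((Equiv.subtypeEquivRight (forall_isMonochromatic_iff_le_ker hA)).trans
    (Setoid.liftEquiv _)), Fintype.card_fun, numComponents_eq_card_quotient]

end IdxHypergraph

open IdxHypergraph in
/-- Edge subset expansion of the chromatic polynomial of a hypergraph:
`χ(G, x) = Σ_{A ⊆ E} (-1)^{|A|} x^{k(G[A])}`. -/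
theorem chromaticCount_eq_sum_powerset {α ι : Type*} (G : IdxHypergraph α ι) (x : ℕ) :
    (G.chromaticCount x : ℤ) =
      ∑ A ∈ G.edges.powerset,
        (-1 : ℤ) ^ A.card * (x : ℤ) ^ numComponents G.inc G.verts A := by
  let S (i : ι) : Finset (G.verts → Fin x) := univ.filter (G.IsMonochromatic · i)
  have card_inf_monochromatic (A : Finset ι) :
      #(A.inf S) = Fintype.card {φ : G.verts → Fin x // ∀ i ∈ A, G.IsMonochromatic φ i} := by
    rw [Fintype.card_subtype]
    congr 1
    ext φ
    simp [S, mem_inf]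
  have card_proper : G.chromaticCount x = #(G.edges.inf fun i => (S i)ᶜ) := by
    rw [chromaticCount, Nat.card_eq_fintype_card, Fintype.card_subtype]
    congr 1
    ext φ
    simp [S, mem_inf, ProperColoring, IsMonochromatic]
  rw [card_proper, inclusion_exclusion_card_inf_compl]
  refine sum_congr rfl fun A hA => ?_
  rw [card_inf_monochromatic, card_forall_isMonochromatic (mem_powerset.1 hA), Fintype.card_fin]
  push_cast
  rfl
end

section
/- Let G = (V, E) be a hypergraph, let A ⊆ E, and let e ∈ E \ A. Suppose C = (V_C, E_C) is a δ-cycle that is a subgraph of G with e ∈ E_C and E_C ⊆ A ∪ {e}. Then k(G[A]) = k(G[A ∪ {e}]), i.e., deleting e from the spanning subgraph G[A ∪ {e}] does not change the number of connected components. -/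
open scoped Classical

/-- A hypergraph with vertex type `α` and edges indexed by elements of `ι`
(the indexing allows parallel edges, i.e. a multiset of edges). Every edge is a
nonempty subset of the vertex set. -/
structure Hypergraph' (α ι : Type*) where
  verts : Finset α
  edges : Finset ι
  inc : ι → Finset α
  inc_nonempty : ∀ i ∈ edges, (inc i).Nonempty
  inc_sub : ∀ i ∈ edges, inc i ⊆ verts

namespace Hypergraph'

variable {α ι : Type*}

/-- `u` and `v` are connected via a sequence of edges from `E'` in which consecutive
edges share a vertex. -/
def Conn (inc : ι → Finset α) (E' : Finset ι) (u v : α) : Prop :=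
  Relation.ReflTransGen (fun a b => ∃ i ∈ E', a ∈ inc i ∧ b ∈ inc i) u v

/-- The number of connected components of the hypergraph with vertex set `V'` and
edge set `E'` (isolated vertices form their own components). -/
noncomputable def numComponents (inc : ι → Finset α) (V' : Finset α) (E' : Finset ι) : ℕ :=
  (V'.image fun v => V'.filter fun u => Conn inc E' u v).card

/-- `(V₁, E₁)` is a subgraph of `(V₂, E₂)` (w.r.t. the incidence function `inc`). -/
def IsSubgraph (inc : ι → Finset α) (V₁ : Finset α) (E₁ : Finset ι)
    (V₂ : Finset α) (E₂ : Finset ι) : Prop :=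
  V₁ ⊆ V₂ ∧ E₁ ⊆ E₂ ∧ ∀ i ∈ E₁, inc i ⊆ V₁

/-- The hypergraph `(V', E')` is δ-cyclic: it has a subgraph with at least one edge
such that deleting any of its edges does not change the number of connected
components. -/
def IsDeltaCyclic (inc : ι → Finset α) (V' : Finset α) (E' : Finset ι) : Prop :=
  ∃ V'' E'', IsSubgraph inc V'' E'' V' E' ∧ E''.Nonempty ∧
    ∀ i ∈ E'', numComponents inc V'' E'' = numComponents inc V'' (E''.erase i)

/-- The hypergraph `(V', E')` is a δ-cycle: it is δ-cyclic and has no proper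
δ-cyclic subgraph. -/
def IsDeltaCycle (inc : ι → Finset α) (V' : Finset α) (E' : Finset ι) : Prop :=
  IsDeltaCyclic inc V' E' ∧
    ∀ V'' E'', IsSubgraph inc V'' E'' V' E' → (V'', E'') ≠ (V', E') →
      ¬ IsDeltaCyclic inc V'' E''

/-- A proper coloring of `G` with colors in `Fin x`: no edge has all its vertices
mapped to the same color. -/
def ProperColoring (G : Hypergraph' α ι) (x : ℕ) (φ : G.verts → Fin x) : Prop :=
  ∀ i ∈ G.edges, ¬ ∃ c : Fin x, ∀ v : G.verts, (v : α) ∈ G.inc i → φ v = c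

/-- The number of proper `x`-colorings of `G`, i.e. the value `χ(G, x)` of the
chromatic polynomial. -/
noncomputable def chromaticCount (G : Hypergraph' α ι) (x : ℕ) : ℕ :=
  Nat.card {φ : G.verts → Fin x // G.ProperColoring x φ}

section Order

variable [LinearOrder ι]

/-- `B` is a broken cycle of `G` w.r.t. the linear order on edges: `B` arises from
deleting the maximal edge of (the edge set of) a δ-cycle that is a subgraph of `G`. -/
def IsBrokenCycle (G : Hypergraph' α ι) (B : Finset ι) : Prop :=
  ∃ V_C E_C e, IsSubgraph G.inc V_C E_C G.verts G.edges ∧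
    IsDeltaCycle G.inc V_C E_C ∧ e ∈ E_C ∧ (∀ i ∈ E_C, i ≤ e) ∧ B = E_C.erase e

/-- The edge `e` closes the broken cycle `B`: `B ∪ {e}` is the edge set of a
δ-cycle in `G`. -/
def Closes (G : Hypergraph' α ι) (B : Finset ι) (e : ι) : Prop :=
  ∃ V_C, IsSubgraph G.inc V_C (insert e B) G.verts G.edges ∧
    IsDeltaCycle G.inc V_C (insert e B)

/-- `e` is the minimal edge closing the broken cycle `B`, i.e. `e = e(B)`. -/
def IsMinCloser (G : Hypergraph' α ι) (B : Finset ι) (e : ι) : Prop :=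
  G.Closes B e ∧ ∀ e', G.Closes B e' → e ≤ e'

/-- `e` is the maximal edge closing the broken cycle `B`, i.e. `e = ē(B)`. -/
def IsMaxCloser (G : Hypergraph' α ι) (B : Finset ι) (e : ι) : Prop :=
  G.Closes B e ∧ ∀ e', G.Closes B e' → e' ≤ e

/-- `A` contains at least one broken cycle, and
`e = m(A) = min { e(B) : B ∈ 𝔅(G, <), B ⊆ A }`. -/
def IsMinClosingEdge (G : Hypergraph' α ι) (A : Finset ι) (e : ι) : Prop :=
  (∃ B, G.IsBrokenCycle B ∧ B ⊆ A ∧ G.IsMinCloser B e) ∧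
    ∀ B e', G.IsBrokenCycle B → B ⊆ A → G.IsMinCloser B e' → e ≤ e'

end Order

end Hypergraph'


/-!
Since a δ-cycle has no proper δ-cyclic subgraph, it is its own witness of δ-cyclicity, so deleting
any of its edges keeps its number of components. A coarsening of a partition with the same number
of blocks is trivial, so all vertices of the edge `e` stay connected in `C - e`, whose edges lie in
`A`. Hence adding `e` to `A` merges no components.
-/

namespace Hypergraph'

variable {α ι : Type*} {inc : ι → Finset α}

section Conn

variable {E E₁ E₂ : Finset ι} {u v w : α}

theorem Conn.symm (h : Conn inc E u v) : Conn inc E v u := by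
  have : Std.Symm fun a b => ∃ i ∈ E, a ∈ inc i ∧ b ∈ inc i :=
    ⟨fun _ _ ⟨i, hi, ha, hb⟩ => ⟨i, hi, hb, ha⟩⟩
  exact Std.Symm.symm (r := Relation.ReflTransGen _) u v h

theorem Conn.trans (huv : Conn inc E u v) (hvw : Conn inc E v w) : Conn inc E u w :=
  Relation.ReflTransGen.trans huv hvw

theorem Conn.mono (hE : E₁ ⊆ E₂) (h : Conn inc E₁ u v) : Conn inc E₂ u v :=
  Relation.ReflTransGen.mono (fun _ _ ⟨i, hi, ha, hb⟩ => ⟨i, hE hi, ha, hb⟩) _ _ h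

theorem conn_insert_eq {e : ι} (he : ∀ a ∈ inc e, ∀ b ∈ inc e, Conn inc E a b) :
    Conn inc (insert e E) = Conn inc E := by
  ext u v
  refine ⟨fun h => ?_, Conn.mono (Finset.subset_insert e E)⟩
  induction h with
  | refl => exact Relation.ReflTransGen.refl
  | tail _ hstep ih =>
    obtain ⟨i, hi, hx, hy⟩ := hstep
    rcases Finset.mem_insert.1 hi with rfl | hiE
    · exact ih.trans (he _ hx _ hy)
    · exact ih.tail ⟨i, hiE, hx, hy⟩

end Conn

section Components

variable {V : Finset α} {E E₁ E₂ : Finset ι} {a b v : α}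

noncomputable def component (inc : ι → Finset α) (V : Finset α) (E : Finset ι) (v : α) : Finset α :=
  V.filter fun u => Conn inc E u v

theorem numComponents_eq_card_image_component :
    numComponents inc V E = (V.image (component inc V E)).card := rfl

theorem component_eq_component_iff (ha : a ∈ V) :
    component inc V E a = component inc V E b ↔ Conn inc E a b := by
  refine ⟨fun h => ?_, fun hab => ?_⟩
  · have : a ∈ component inc V E b := h ▸ Finset.mem_filter.2 ⟨ha, Relation.ReflTransGen.refl⟩
    exact (Finset.mem_filter.1 this).2
  · ext u
    simp only [component, Finset.mem_filter]
    exact and_congr_right fun _ => ⟨fun h => h.trans hab, fun h => h.trans hab.symm⟩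

theorem component_eq_saturation (hE : E₁ ⊆ E₂) (hv : v ∈ V) :
    component inc V E₂ v =
      V.filter fun u => ∃ w ∈ component inc V E₁ v, Conn inc E₂ u w := by
  ext u
  simp only [component, Finset.mem_filter]
  refine and_congr_right fun _ => ⟨fun huv => ⟨v, ⟨hv, Relation.ReflTransGen.refl⟩, huv⟩, ?_⟩
  rintro ⟨w, ⟨-, hwv⟩, huw⟩
  exact huw.trans (hwv.mono hE)

theorem conn_of_numComponents_eq (hE : E₁ ⊆ E₂)
    (hcard : numComponents inc V E₂ = numComponents inc V E₁)
    (ha : a ∈ V) (hb : b ∈ V) (hab : Conn inc E₂ a b) : Conn inc E₁ a b := by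
  -- `saturate` maps `E₁`-components onto `E₂`-components; equal counts make it injective.
  set saturate : Finset α → Finset α :=
    fun S => V.filter fun u => ∃ w ∈ S, Conn inc E₂ u w
  have hsat : Set.EqOn (saturate ∘ component inc V E₁) (component inc V E₂) V :=
    fun v hv => (component_eq_saturation hE hv).symm
  have hinj : Set.InjOn saturate (V.image (component inc V E₁)) := by
    refine Finset.injOn_of_card_image_eq ?_
    simp only [numComponents_eq_card_image_component] at hcard
    rwa [Finset.image_image, Finset.image_congr hsat]
  rw [← component_eq_component_iff ha] at hab ⊢
  exact hinj (Finset.mem_image_of_mem _ ha) (Finset.mem_image_of_mem _ hb)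
    ((hsat ha).trans (hab.trans (hsat hb).symm))

end Components

section DeltaCycle

variable {V : Finset α} {E : Finset ι}

/-- By minimality, a δ-cycle is its own witness of δ-cyclicity. -/
theorem IsDeltaCycle.isSubgraph_self_and_numComponents_erase (h : IsDeltaCycle inc V E) :
    IsSubgraph inc V E V E ∧
      ∀ i ∈ E, numComponents inc V E = numComponents inc V (E.erase i) := by
  obtain ⟨⟨V', E', hsub, hne, hdel⟩, hmin⟩ := h
  obtain ⟨rfl, rfl⟩ : V' = V ∧ E' = E := by
    by_contra hne'
    exact hmin V' E' hsub (by simpa using hne')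
      ⟨V', E', ⟨subset_rfl, subset_rfl, hsub.2.2⟩, hne, hdel⟩
  exact ⟨⟨subset_rfl, subset_rfl, hsub.2.2⟩, hdel⟩

theorem IsDeltaCycle.conn_erase (h : IsDeltaCycle inc V E) {i : ι} (hi : i ∈ E) {a b : α}
    (ha : a ∈ inc i) (hb : b ∈ inc i) : Conn inc (E.erase i) a b := by
  obtain ⟨⟨-, -, hincV⟩, hdel⟩ := h.isSubgraph_self_and_numComponents_erase
  exact conn_of_numComponents_eq (Finset.erase_subset i E) (hdel i hi)
    (hincV i hi ha) (hincV i hi hb) (Relation.ReflTransGen.single ⟨i, hi, ha, hb⟩)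

end DeltaCycle

end Hypergraph'

open Hypergraph' in
theorem numComponents_insert_of_deltaCycle_general {α ι : Type*} (G : Hypergraph' α ι)
    (A : Finset ι) (e : ι)
    (V_C : Finset α) (E_C : Finset ι)
    (hcyc : IsDeltaCycle G.inc V_C E_C)
    (heC : e ∈ E_C) (hEC : E_C ⊆ insert e A) :
    numComponents G.inc G.verts A = numComponents G.inc G.verts (insert e A) := by
  have hbridge : ∀ a ∈ G.inc e, ∀ b ∈ G.inc e, Conn G.inc A a b := fun _ ha _ hb =>
    (hcyc.conn_erase heC ha hb).mono (Finset.subset_insert_iff.1 hEC)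
  simp only [numComponents, conn_insert_eq hbridge]

open Hypergraph' in
/-- If `e ∉ A` and there is a δ-cycle `C = (V_C, E_C)` in `G` with `e ∈ E_C` and
`E_C ⊆ A ∪ {e}`, then deleting `e` from the spanning subgraph `G[A ∪ {e}]` does not
change the number of connected components: `k(G[A]) = k(G[A ∪ {e}])`. -/
theorem numComponents_insert_of_deltaCycle {α ι : Type*} (G : Hypergraph' α ι)
    (A : Finset ι) (hA : A ⊆ G.edges) (e : ι) (he : e ∈ G.edges) (heA : e ∉ A)
    (V_C : Finset α) (E_C : Finset ι)
    (hsub : IsSubgraph G.inc V_C E_C G.verts G.edges)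
    (hcyc : IsDeltaCycle G.inc V_C E_C)
    (heC : e ∈ E_C) (hEC : E_C ⊆ insert e A) :
    numComponents G.inc G.verts A = numComponents G.inc G.verts (insert e A) :=
  numComponents_insert_of_deltaCycle_general G A e V_C E_C hcyc heC hEC
end

section
/- Let G = (V, E) be a hypergraph with a linear order < on the edge set E. For a broken cycle B ∈ 𝔅(G, <), let e(B) denote the minimal edge (with respect to <) such that B ∪ {e(B)} is the edge set of a δ-cycle in G; for an edge subset A ⊆ E containing at least one broken cycle, let m(A) = min{e(B) : B ∈ 𝔅(G, <), B ⊆ A}. Then for every edge e₀ ∈ E and every natural number x, the sum of (-1)^{|A|} x^{k(G[A])} over all edge subsets A ⊆ E such that A contains at least one broken cycle and m(A) = e₀ equals 0 (as an integer). -/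
open scoped Classical

/-- A hypergraph with vertex type `α` and edges indexed by elements of `ι`
(the indexing allows parallel edges, i.e. a multiset of edges). Every edge is a
nonempty subset of the vertex set. -/
structure DHypergraph (α ι : Type*) where
  verts : Finset α
  edges : Finset ι
  inc : ι → Finset α
  inc_nonempty : ∀ i ∈ edges, (inc i).Nonempty
  inc_sub : ∀ i ∈ edges, inc i ⊆ verts

namespace DHypergraph

variable {α ι : Type*}

/-- `u` and `v` are connected via a sequence of edges from `E'` in which consecutive
edges share a vertex. -/
def Conn (inc : ι → Finset α) (E' : Finset ι) (u v : α) : Prop :=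
  Relation.ReflTransGen (fun a b => ∃ i ∈ E', a ∈ inc i ∧ b ∈ inc i) u v

/-- The number of connected components of the hypergraph with vertex set `V'` and
edge set `E'` (isolated vertices form their own components). -/
noncomputable def numComponents (inc : ι → Finset α) (V' : Finset α) (E' : Finset ι) : ℕ :=
  (V'.image fun v => V'.filter fun u => Conn inc E' u v).card

/-- `(V₁, E₁)` is a subgraph of `(V₂, E₂)` (w.r.t. the incidence function `inc`). -/
def IsSubgraph (inc : ι → Finset α) (V₁ : Finset α) (E₁ : Finset ι)
    (V₂ : Finset α) (E₂ : Finset ι) : Prop :=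
  V₁ ⊆ V₂ ∧ E₁ ⊆ E₂ ∧ ∀ i ∈ E₁, inc i ⊆ V₁

/-- The hypergraph `(V', E')` is δ-cyclic: it has a subgraph with at least one edge
such that deleting any of its edges does not change the number of connected
components. -/
def IsDeltaCyclic (inc : ι → Finset α) (V' : Finset α) (E' : Finset ι) : Prop :=
  ∃ V'' E'', IsSubgraph inc V'' E'' V' E' ∧ E''.Nonempty ∧
    ∀ i ∈ E'', numComponents inc V'' E'' = numComponents inc V'' (E''.erase i)

/-- The hypergraph `(V', E')` is a δ-cycle: it is δ-cyclic and has no proper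
δ-cyclic subgraph. -/
def IsDeltaCycle (inc : ι → Finset α) (V' : Finset α) (E' : Finset ι) : Prop :=
  IsDeltaCyclic inc V' E' ∧
    ∀ V'' E'', IsSubgraph inc V'' E'' V' E' → (V'', E'') ≠ (V', E') →
      ¬ IsDeltaCyclic inc V'' E''

/-- A proper coloring of `G` with colors in `Fin x`: no edge has all its vertices
mapped to the same color. -/
def ProperColoring (G : DHypergraph α ι) (x : ℕ) (φ : G.verts → Fin x) : Prop :=
  ∀ i ∈ G.edges, ¬ ∃ c : Fin x, ∀ v : G.verts, (v : α) ∈ G.inc i → φ v = c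

/-- The number of proper `x`-colorings of `G`, i.e. the value `χ(G, x)` of the
chromatic polynomial. -/
noncomputable def chromaticCount (G : DHypergraph α ι) (x : ℕ) : ℕ :=
  Nat.card {φ : G.verts → Fin x // G.ProperColoring x φ}

section Order

variable [LinearOrder ι]

/-- `B` is a broken cycle of `G` w.r.t. the linear order on edges: `B` arises from
deleting the maximal edge of (the edge set of) a δ-cycle that is a subgraph of `G`. -/
def IsBrokenCycle (G : DHypergraph α ι) (B : Finset ι) : Prop :=
  ∃ V_C E_C e, IsSubgraph G.inc V_C E_C G.verts G.edges ∧
    IsDeltaCycle G.inc V_C E_C ∧ e ∈ E_C ∧ (∀ i ∈ E_C, i ≤ e) ∧ B = E_C.erase e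

/-- The edge `e` closes the broken cycle `B`: `B ∪ {e}` is the edge set of a
δ-cycle in `G`. -/
def Closes (G : DHypergraph α ι) (B : Finset ι) (e : ι) : Prop :=
  ∃ V_C, IsSubgraph G.inc V_C (insert e B) G.verts G.edges ∧
    IsDeltaCycle G.inc V_C (insert e B)

/-- `e` is the minimal edge closing the broken cycle `B`, i.e. `e = e(B)`. -/
def IsMinCloser (G : DHypergraph α ι) (B : Finset ι) (e : ι) : Prop :=
  G.Closes B e ∧ ∀ e', G.Closes B e' → e ≤ e'

/-- `e` is the maximal edge closing the broken cycle `B`, i.e. `e = ē(B)`. -/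
def IsMaxCloser (G : DHypergraph α ι) (B : Finset ι) (e : ι) : Prop :=
  G.Closes B e ∧ ∀ e', G.Closes B e' → e' ≤ e

/-- `A` contains at least one broken cycle, and
`e = m(A) = min { e(B) : B ∈ 𝔅(G, <), B ⊆ A }`. -/
def IsMinClosingEdge (G : DHypergraph α ι) (A : Finset ι) (e : ι) : Prop :=
  (∃ B, G.IsBrokenCycle B ∧ B ⊆ A ∧ G.IsMinCloser B e) ∧
    ∀ B e', G.IsBrokenCycle B → B ⊆ A → G.IsMinCloser B e' → e ≤ e'

end Order

end DHypergraph

/-!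
The sets `A` with `m(A) = e₀` are those containing a broken cycle `B` with `e(B) ≤ e₀` but none
with `e(B) < e₀`. Both classes are up-closures of families of broken cycles, so it suffices
that the signed sum over such an up-closure vanishes. By inclusion–exclusion this reduces to
the interval `{A | U ⊆ A ⊆ E}` above a union `U` of broken cycles. Let `g` be the largest edge
closing a broken cycle `B ⊆ U`. Every edge of `U` lies in a broken cycle inside `U`, which is
closed by its own, larger, maximal edge; hence `g ∉ U`. Since `B ∪ {g}` is a δ-cycle, deleting
`g` does not change the number of components, so the ends of `g` are connected through `B ⊆ U`.
Toggling `g` therefore keeps `k(G[A])` and flips the sign, and the interval sum vanishes.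
-/

namespace Finset

theorem sum_powerset_filter_superset_eq_zero {ι M : Type*} [DecidableEq ι] [AddCommGroup M]
    {E U : Finset ι} {g : ι} (hg : g ∈ E) (hgU : g ∉ U) {f : Finset ι → M}
    (hf : ∀ A, U ⊆ A → g ∉ A → f (insert g A) = -f A) :
    ∑ A ∈ E.powerset.filter (U ⊆ ·), f A = 0 := by
  have hgE : g ∉ E.erase g := notMem_erase g E
  rw [sum_filter, ← insert_erase hg, sum_powerset_insert hgE, ← sum_add_distrib]
  refine sum_eq_zero fun A hA => ?_
  have hgA : g ∉ A := fun h => hgE (mem_powerset.1 hA h)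
  rw [if_congr (subset_insert_iff_of_notMem hgU) rfl rfl]
  split_ifs with hUA
  · rw [hf A hUA hgA, add_neg_cancel]
  · rw [add_zero]

theorem sum_filter_exists_le_eq_zero {α M : Type*} [SemilatticeSup α] [DecidableLE α]
    [DecidableEq α] [AddCommGroup M] {P : α → Prop} (hP : ∀ a b, P a → P b → P (a ⊔ b))
    (f : α → M) (𝔊 : Finset α) (h𝔊 : ∀ u ∈ 𝔊, P u) (𝒜 : Finset α)
    (h : ∀ u, P u → ∑ a ∈ 𝒜.filter (u ≤ ·), f a = 0) :
    ∑ a ∈ 𝒜.filter (fun a => ∃ u ∈ 𝔊, u ≤ a), f a = 0 := by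
  induction 𝔊 using Finset.induction_on generalizing 𝒜 with
  | empty => simp
  | insert u₀ 𝔊 _ ih =>
    have hu₀ : P u₀ := h𝔊 u₀ (mem_insert_self u₀ 𝔊)
    have h𝔊' : ∀ u ∈ 𝔊, P u := fun u hu => h𝔊 u (mem_insert_of_mem hu)
    have hsplit : 𝒜.filter (fun a => ∃ u ∈ insert u₀ 𝔊, u ≤ a) =
        𝒜.filter (u₀ ≤ ·) ∪ 𝒜.filter (fun a => ∃ u ∈ 𝔊, u ≤ a) := by
      rw [← filter_or]
      simp only [exists_mem_insert]
    have hinter : 𝒜.filter (u₀ ≤ ·) ∩ 𝒜.filter (fun a => ∃ u ∈ 𝔊, u ≤ a) =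
        (𝒜.filter (u₀ ≤ ·)).filter (fun a => ∃ u ∈ 𝔊, u ≤ a) := by
      rw [filter_filter, filter_and]
    have hrestrict : ∀ u, P u → ∑ a ∈ (𝒜.filter (u₀ ≤ ·)).filter (u ≤ ·), f a = 0 := by
      intro u hu
      rw [filter_filter]
      simp_rw [← sup_le_iff]
      exact h _ (hP u₀ u hu₀ hu)
    have hsum := sum_union_inter (f := f) (s₁ := 𝒜.filter (u₀ ≤ ·))
      (s₂ := 𝒜.filter (fun a => ∃ u ∈ 𝔊, u ≤ a))
    rw [hinter, ih h𝔊' _ hrestrict, ih h𝔊' 𝒜 h, h u₀ hu₀, add_zero, add_zero] at hsum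
    rw [hsplit, hsum]

theorem apply_eq_of_card_image_eq {α β γ : Type*} [DecidableEq β] [DecidableEq γ]
    {s : Finset α} {f : α → β} {g : α → γ} (Φ : β → γ) (hg : ∀ a ∈ s, g a = Φ (f a))
    (hcard : (s.image g).card = (s.image f).card) {a b : α} (ha : a ∈ s) (hb : b ∈ s)
    (h : g a = g b) : f a = f b := by
  have himage : s.image g = (s.image f).image Φ := by
    rw [image_image]
    exact image_congr hg
  rw [himage] at hcard
  exact injOn_of_card_image_eq hcard (mem_image_of_mem f ha) (mem_image_of_mem f hb)
    (by rwa [← hg a ha, ← hg b hb])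

end Finset

namespace DHypergraph

variable {α ι : Type*}

section Connectivity

variable {inc : ι → Finset α}

theorem Conn.mono {E₁ E₂ : Finset ι} (h : E₁ ⊆ E₂) {u v : α} (hc : Conn inc E₁ u v) :
    Conn inc E₂ u v :=
  Relation.ReflTransGen.mono (fun _ _ ⟨i, hi, ha, hb⟩ => ⟨i, h hi, ha, hb⟩) _ _ hc

theorem Conn.symm {E' : Finset ι} {u v : α} (h : Conn inc E' u v) : Conn inc E' v u :=
  haveI : Std.Symm (fun a b : α => ∃ i ∈ E', a ∈ inc i ∧ b ∈ inc i) :=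
    ⟨fun _ _ ⟨i, hi, ha, hb⟩ => ⟨i, hi, hb, ha⟩⟩
  Relation.ReflTransGen.stdSymm.symm _ _ h

theorem Conn.of_mem {E' : Finset ι} {i : ι} (hi : i ∈ E') {a b : α} (ha : a ∈ inc i)
    (hb : b ∈ inc i) : Conn inc E' a b :=
  Relation.ReflTransGen.single ⟨i, hi, ha, hb⟩

/-- The components for `E₁` refine those for `E₂`, and a refinement with the same number of
blocks is trivial. -/
theorem Conn.of_numComponents_eq {V' : Finset α} {E₁ E₂ : Finset ι} (hsub : E₁ ⊆ E₂)
    (hcard : numComponents inc V' E₂ = numComponents inc V' E₁) {u v : α} (hu : u ∈ V')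
    (hv : v ∈ V') (h : Conn inc E₂ u v) : Conn inc E₁ u v := by
  have hclass : ∀ w ∈ V', V'.filter (Conn inc E₂ · w) =
      V'.filter (fun z => ∃ y ∈ V'.filter (Conn inc E₁ · w), Conn inc E₂ z y) := by
    intro w hw
    ext z
    simp only [Finset.mem_filter]
    constructor
    · rintro ⟨hz, hzw⟩
      exact ⟨hz, w, ⟨hw, Relation.ReflTransGen.refl⟩, hzw⟩
    · rintro ⟨hz, y, ⟨-, hyw⟩, hzy⟩
      exact ⟨hz, hzy.trans (hyw.mono hsub)⟩
  have hsame : V'.filter (Conn inc E₂ · u) = V'.filter (Conn inc E₂ · v) := by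
    ext z
    simp only [Finset.mem_filter]
    exact and_congr_right fun _ => ⟨fun hzu => hzu.trans h, fun hzv => hzv.trans h.symm⟩
  have key := Finset.apply_eq_of_card_image_eq
    (fun S => V'.filter fun z => ∃ y ∈ S, Conn inc E₂ z y) hclass hcard hu hv hsame
  have hu₁ : u ∈ V'.filter (Conn inc E₁ · u) := Finset.mem_filter.2 ⟨hu, Relation.ReflTransGen.refl⟩
  rw [key] at hu₁
  exact (Finset.mem_filter.1 hu₁).2

theorem numComponents_insert_of_conn [DecidableEq ι] {E' : Finset ι} {g : ι}
    (H : ∀ a ∈ inc g, ∀ b ∈ inc g, Conn inc E' a b) (V' : Finset α) :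
    numComponents inc V' (insert g E') = numComponents inc V' E' := by
  have hconn : Conn inc (insert g E') = Conn inc E' := by
    funext u v
    refine propext ⟨fun h => ?_, (·.mono (Finset.subset_insert g E'))⟩
    induction h with
    | refl => exact Relation.ReflTransGen.refl
    | tail _ step ih =>
      obtain ⟨i, hi, hb, hc⟩ := step
      rcases Finset.mem_insert.1 hi with rfl | hiE
      · exact ih.trans (H _ hb _ hc)
      · exact ih.trans (Conn.of_mem hiE hb hc)
  simp only [numComponents, hconn]

theorem IsDeltaCycle.conn_erase {V' : Finset α} {E' : Finset ι} (hC : IsDeltaCycle inc V' E')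
    {i : ι} (hi : i ∈ E') : ∀ a ∈ inc i, ∀ b ∈ inc i, Conn inc (E'.erase i) a b := by
  obtain ⟨⟨V'', E'', hsub, hne, hk⟩, hmin⟩ := hC
  -- By minimality, the witness of δ-cyclicity is the δ-cycle itself.
  have hwitness : (V'', E'') = (V', E') := by
    by_contra hproper
    exact hmin V'' E'' hsub hproper
      ⟨V'', E'', ⟨subset_rfl, subset_rfl, hsub.2.2⟩, hne, hk⟩
  obtain ⟨rfl, rfl⟩ := Prod.mk.inj hwitness
  intro a ha b hb
  have hinc := hsub.2.2 i hi
  exact Conn.of_numComponents_eq (Finset.erase_subset i E'') (hk i hi) (hinc ha) (hinc hb)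
    (Conn.of_mem hi ha hb)

end Connectivity

variable [LinearOrder ι] {G : DHypergraph α ι}

theorem Closes.mem_edges {B : Finset ι} {e : ι} (h : G.Closes B e) : e ∈ G.edges :=
  h.choose_spec.1.2.1 (Finset.mem_insert_self e B)

theorem Closes.conn {B : Finset ι} {e : ι} (h : G.Closes B e) :
    ∀ a ∈ G.inc e, ∀ b ∈ G.inc e, Conn G.inc B a b := fun a ha b hb =>
  -- `convert` reconciles the classical `DecidableEq ι` of `IsDeltaCycle` with the order's.
  (h.choose_spec.2.conn_erase (Finset.mem_insert_self e B) a ha b hb).mono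
    (by convert Finset.erase_insert_subset e B)

theorem IsBrokenCycle.subset_edges {B : Finset ι} (h : G.IsBrokenCycle B) : B ⊆ G.edges := by
  obtain ⟨V_C, E_C, e, hsub, -, -, -, rfl⟩ := h
  exact (Finset.erase_subset e E_C).trans hsub.2.1

theorem IsBrokenCycle.exists_closes_gt {B : Finset ι} (h : G.IsBrokenCycle B) :
    ∃ e, G.Closes B e ∧ ∀ i ∈ B, i < e := by
  obtain ⟨V_C, E_C, e, hsub, hC, he, hmax, rfl⟩ := h
  refine ⟨e, ⟨V_C, ?_⟩, fun i hi => ?_⟩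
  · rw [Finset.insert_erase he]
    exact ⟨hsub, hC⟩
  · obtain ⟨hie, hi⟩ := Finset.mem_erase.1 hi
    exact lt_of_le_of_ne (hmax i hi) hie

theorem sum_superset_eq_zero_of_conn (x : ℕ) {U : Finset ι} {g : ι} (hg : g ∈ G.edges)
    (hgU : g ∉ U) (H : ∀ a ∈ G.inc g, ∀ b ∈ G.inc g, Conn G.inc U a b) :
    ∑ A ∈ G.edges.powerset.filter (U ⊆ ·),
      (-1 : ℤ) ^ A.card * (x : ℤ) ^ numComponents G.inc G.verts A = 0 := by
  refine Finset.sum_powerset_filter_superset_eq_zero hg hgU fun A hUA hgA => ?_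
  rw [Finset.card_insert_of_notMem hgA,
    numComponents_insert_of_conn (fun a ha b hb => (H a ha b hb).mono hUA), pow_succ]
  ring

def IsBrokenCycleUnion (G : DHypergraph α ι) (U : Finset ι) : Prop :=
  (∃ B, G.IsBrokenCycle B ∧ B ⊆ U) ∧ ∀ i ∈ U, ∃ B, G.IsBrokenCycle B ∧ B ⊆ U ∧ i ∈ B

theorem IsBrokenCycle.isBrokenCycleUnion {B : Finset ι} (h : G.IsBrokenCycle B) :
    G.IsBrokenCycleUnion B :=
  ⟨⟨B, h, subset_rfl⟩, fun _ hi => ⟨B, h, subset_rfl, hi⟩⟩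

theorem IsBrokenCycleUnion.union {U V : Finset ι} (hU : G.IsBrokenCycleUnion U)
    (hV : G.IsBrokenCycleUnion V) : G.IsBrokenCycleUnion (U ∪ V) := by
  obtain ⟨⟨B, hB, hBU⟩, hUcover⟩ := hU
  refine ⟨⟨B, hB, hBU.trans Finset.subset_union_left⟩, fun i hi => ?_⟩
  rcases Finset.mem_union.1 hi with hi | hi
  · obtain ⟨B, hB, hBU, hiB⟩ := hUcover i hi
    exact ⟨B, hB, hBU.trans Finset.subset_union_left, hiB⟩
  · obtain ⟨B, hB, hBV, hiB⟩ := hV.2 i hi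
    exact ⟨B, hB, hBV.trans Finset.subset_union_right, hiB⟩

theorem IsBrokenCycleUnion.sum_superset_eq_zero {U : Finset ι} (hU : G.IsBrokenCycleUnion U)
    (x : ℕ) :
    ∑ A ∈ G.edges.powerset.filter (U ⊆ ·),
      (-1 : ℤ) ^ A.card * (x : ℤ) ^ numComponents G.inc G.verts A = 0 := by
  obtain ⟨⟨B₀, hB₀, hB₀U⟩, hcover⟩ := hU
  let closers := G.edges.filter fun e => ∃ B, G.IsBrokenCycle B ∧ B ⊆ U ∧ G.Closes B e
  have hne : closers.Nonempty := by
    obtain ⟨e, he, -⟩ := hB₀.exists_closes_gt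
    exact ⟨e, Finset.mem_filter.2 ⟨he.mem_edges, B₀, hB₀, hB₀U, he⟩⟩
  obtain ⟨hgE, B, -, hBU, hBg⟩ := Finset.mem_filter.1 (closers.max'_mem hne)
  have hgU : closers.max' hne ∉ U := by
    intro hgU
    obtain ⟨B', hB', hB'U, hgB'⟩ := hcover _ hgU
    obtain ⟨e, he, hgt⟩ := hB'.exists_closes_gt
    exact (hgt _ hgB').not_ge
      (closers.le_max' e (Finset.mem_filter.2 ⟨he.mem_edges, B', hB', hB'U, he⟩))
  exact sum_superset_eq_zero_of_conn x hgE hgU fun a ha b hb => (hBg.conn a ha b hb).mono hBU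

theorem sum_filter_exists_brokenCycle_subset_eq_zero (Q : Finset ι → Prop)
    (hQ : ∀ B, Q B → G.IsBrokenCycle B) (x : ℕ) :
    ∑ A ∈ G.edges.powerset.filter (fun A => ∃ B, Q B ∧ B ⊆ A),
      (-1 : ℤ) ^ A.card * (x : ℤ) ^ numComponents G.inc G.verts A = 0 := by
  have hfamily := Finset.sum_filter_exists_le_eq_zero (P := G.IsBrokenCycleUnion)
    (fun _ _ hU hV => hU.union hV) _ (G.edges.powerset.filter Q)
    (fun B hB => (hQ B (Finset.mem_filter.1 hB).2).isBrokenCycleUnion) G.edges.powerset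
    (fun U hU => hU.sum_superset_eq_zero x)
  refine (Finset.sum_congr (Finset.filter_congr fun A _ => ?_) fun _ _ => rfl).trans hfamily
  constructor
  · rintro ⟨B, hB, hBA⟩
    exact ⟨B, Finset.mem_filter.2 ⟨Finset.mem_powerset.2 (hQ B hB).subset_edges, hB⟩, hBA⟩
  · rintro ⟨B, hB, hBA⟩
    exact ⟨B, (Finset.mem_filter.1 hB).2, hBA⟩

theorem exists_brokenCycle_minCloser_le_iff {A : Finset ι} {e₀ : ι} :
    (∃ B, (G.IsBrokenCycle B ∧ ∃ e, G.IsMinCloser B e ∧ e ≤ e₀) ∧ B ⊆ A) ↔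
      G.IsMinClosingEdge A e₀ ∨
        ∃ B, (G.IsBrokenCycle B ∧ ∃ e, G.IsMinCloser B e ∧ e < e₀) ∧ B ⊆ A := by
  refine ⟨fun ⟨B, ⟨hB, e, he, hle⟩, hBA⟩ => ?_, ?_⟩
  · refine or_iff_not_imp_right.2 fun hlt => ?_
    have hge : ∀ B e, G.IsBrokenCycle B → B ⊆ A → G.IsMinCloser B e → e₀ ≤ e :=
      fun B e hB hBA he => not_lt.1 fun hlt' => hlt ⟨B, ⟨hB, e, he, hlt'⟩, hBA⟩
    exact ⟨⟨B, hB, hBA, le_antisymm hle (hge B e hB hBA he) ▸ he⟩, hge⟩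
  · rintro (⟨⟨B, hB, hBA, he⟩, -⟩ | ⟨B, ⟨hB, e, he, hlt⟩, hBA⟩)
    · exact ⟨B, ⟨hB, e₀, he, le_rfl⟩, hBA⟩
    · exact ⟨B, ⟨hB, e, he, hlt.le⟩, hBA⟩

end DHypergraph

open DHypergraph in
theorem sum_isMinClosingEdge_eq_zero_general {α ι : Type*} [LinearOrder ι]
    (G : DHypergraph α ι) (e₀ : ι) (x : ℕ) :
    ∑ A ∈ G.edges.powerset.filter fun A => G.IsMinClosingEdge A e₀,
      (-1 : ℤ) ^ A.card * (x : ℤ) ^ numComponents G.inc G.verts A = 0 := by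
  have hdisj : Disjoint (G.edges.powerset.filter fun A => G.IsMinClosingEdge A e₀)
      (G.edges.powerset.filter fun A =>
        ∃ B, (G.IsBrokenCycle B ∧ ∃ e, G.IsMinCloser B e ∧ e < e₀) ∧ B ⊆ A) :=
    Finset.disjoint_filter.2 fun A _ hmin ⟨B, ⟨hB, e, he, hlt⟩, hBA⟩ =>
      (hmin.2 B e hB hBA he).not_gt hlt
  have hle := sum_filter_exists_brokenCycle_subset_eq_zero
    (fun B => G.IsBrokenCycle B ∧ ∃ e, G.IsMinCloser B e ∧ e ≤ e₀) (fun _ h => h.1) x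
  rwa [Finset.filter_congr fun A _ => exists_brokenCycle_minCloser_le_iff, Finset.filter_or,
    Finset.sum_union hdisj, sum_filter_exists_brokenCycle_subset_eq_zero _ (fun _ h => h.1),
    add_zero] at hle

open DHypergraph in
/-- The summands of the edge subset expansion over all `A ⊆ E` containing a broken
cycle with `m(A) = e₀` cancel:
`Σ_{A ⊆ E, m(A) = e₀} (-1)^{|A|} x^{k(G[A])} = 0`. -/
theorem sum_isMinClosingEdge_eq_zero {α ι : Type*} [LinearOrder ι]
    (G : DHypergraph α ι) (e₀ : ι) (he₀ : e₀ ∈ G.edges) (x : ℕ) :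
    ∑ A ∈ G.edges.powerset.filter fun A => G.IsMinClosingEdge A e₀,
      (-1 : ℤ) ^ A.card * (x : ℤ) ^ numComponents G.inc G.verts A = 0 :=
  sum_isMinClosingEdge_eq_zero_general G e₀ x
end

section
/- Let G = (V, E) be a hypergraph with a linear order < on the edge set E. For a broken cycle B ∈ 𝔅(G, <), let ē(B) denote the maximal edge (with respect to <) such that B ∪ {ē(B)} is the edge set of a δ-cycle in G. Let 𝒟' ⊆ 𝔅(G, <) and let B ∈ 𝔅(G, <) be a broken cycle such that ē(B) ≮ ē(B') for all B' ∈ 𝒟'. Then for every A ⊆ E with ē(B) ∉ A, the following are equivalent: (i) B ⊆ A and B' ⊄ A for all B' ∈ 𝒟'; (ii) B ⊆ A ∪ {ē(B)} and B' ⊄ A ∪ {ē(B)} for all B' ∈ 𝒟'. -/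
open scoped Classical

/-!
Every edge of a broken cycle `B` lies below the edge that closes it, hence below `ē(B)`; so
`ē(B) ∉ B`. Likewise, if `ē(B)` belonged to some `B' ∈ 𝒟'`, then `ē(B')` would exceed `ē(B)`,
which the hypothesis forbids. Thus `ē(B)` lies in none of the sets involved, and adding it to `A`
changes none of the inclusions.
-/

namespace Hypergraph'

variable {α ι : Type*} [LinearOrder ι] {G : Hypergraph' α ι} {B : Finset ι} {e : ι}

theorem Closes.mem_edges (h : G.Closes B e) : e ∈ G.edges :=
  let ⟨_, ⟨_, hE, _⟩, _⟩ := h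
  hE (Finset.mem_insert_self e B)

theorem Closes.exists_isMaxCloser_ge (h : G.Closes B e) : ∃ e', G.IsMaxCloser B e' ∧ e ≤ e' := by
  set S := G.edges.filter (G.Closes B)
  have mem_S : ∀ {x}, G.Closes B x → x ∈ S := fun hx => Finset.mem_filter.2 ⟨hx.mem_edges, hx⟩
  exact ⟨S.max' ⟨e, mem_S h⟩,
    ⟨(Finset.mem_filter.1 (S.max'_mem _)).2, fun x hx => S.le_max' x (mem_S hx)⟩,
    S.le_max' e (mem_S h)⟩

theorem IsBrokenCycle.exists_closes_forall_lt (hB : G.IsBrokenCycle B) :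
    ∃ e, G.Closes B e ∧ ∀ x ∈ B, x < e := by
  obtain ⟨V_C, E_C, e, hsub, hcyc, heC, hemax, rfl⟩ := hB
  refine ⟨e, ⟨V_C, by rw [Finset.insert_erase heC]; exact ⟨hsub, hcyc⟩⟩, fun x hx => ?_⟩
  exact (hemax x (Finset.mem_of_mem_erase hx)).lt_of_ne (Finset.ne_of_mem_erase hx)

theorem IsBrokenCycle.lt_of_isMaxCloser (hB : G.IsBrokenCycle B) (he : G.IsMaxCloser B e) :
    ∀ x ∈ B, x < e := by
  obtain ⟨e₀, he₀, hlt⟩ := hB.exists_closes_forall_lt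
  exact fun x hx => (hlt x hx).trans_le (he.2 e₀ he₀)

theorem IsBrokenCycle.exists_isMaxCloser_gt (hB : G.IsBrokenCycle B) {x : ι} (hx : x ∈ B) :
    ∃ e, G.IsMaxCloser B e ∧ x < e := by
  obtain ⟨e₀, he₀, hlt⟩ := hB.exists_closes_forall_lt
  obtain ⟨e, he, hle⟩ := he₀.exists_isMaxCloser_ge
  exact ⟨e, he, (hlt x hx).trans_le hle⟩

end Hypergraph'

open Hypergraph' in
theorem mem_insert_maxCloser_iff_general {α ι : Type*} [LinearOrder ι]
    (G : Hypergraph' α ι)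
    (D' : Finset (Finset ι)) (hD' : ∀ B' ∈ D', G.IsBrokenCycle B')
    (B : Finset ι) (hB : G.IsBrokenCycle B)
    (eB : ι) (heB : G.IsMaxCloser B eB)
    (hmax : ∀ B' ∈ D', ∀ e', G.IsMaxCloser B' e' → ¬ eB < e')
    (A : Finset ι) :
    (B ⊆ A ∧ ∀ B' ∈ D', ¬ B' ⊆ A) ↔
      (B ⊆ insert eB A ∧ ∀ B' ∈ D', ¬ B' ⊆ insert eB A) := by
  have eB_notMem_B : eB ∉ B := fun h => lt_irrefl eB (hB.lt_of_isMaxCloser heB eB h)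
  have eB_notMem_D' : ∀ B' ∈ D', eB ∉ B' := fun B' hB' h => by
    obtain ⟨e', he', hlt⟩ := (hD' B' hB').exists_isMaxCloser_gt h
    exact hmax B' hB' e' he' hlt
  rw [Finset.subset_insert_iff_of_notMem eB_notMem_B]
  refine and_congr_right' (forall₂_congr fun B' hB' => ?_)
  rw [Finset.subset_insert_iff_of_notMem (eB_notMem_D' B' hB')]

open Hypergraph' in
/-- Let `D'` be a set of broken cycles of `G` and let `B` be a broken cycle whose
maximal closing edge `ē(B)` satisfies `ē(B) ≮ ē(B')` for all `B' ∈ D'`. Then for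
`A ⊆ E` with `ē(B) ∉ A`: `A` contains `B` and no member of `D'` iff `A ∪ {ē(B)}`
contains `B` and no member of `D'`. -/
theorem mem_insert_maxCloser_iff {α ι : Type*} [LinearOrder ι]
    (G : Hypergraph' α ι)
    (D' : Finset (Finset ι)) (hD' : ∀ B' ∈ D', G.IsBrokenCycle B')
    (B : Finset ι) (hB : G.IsBrokenCycle B)
    (eB : ι) (heB : G.IsMaxCloser B eB)
    (hmax : ∀ B' ∈ D', ∀ e', G.IsMaxCloser B' e' → ¬ eB < e')
    (A : Finset ι) (hA : A ⊆ G.edges) (heA : eB ∉ A) :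
    (B ⊆ A ∧ ∀ B' ∈ D', ¬ B' ⊆ A) ↔
      (B ⊆ insert eB A ∧ ∀ B' ∈ D', ¬ B' ⊆ insert eB A) :=
  mem_insert_maxCloser_iff_general G D' hD' B hB eB heB hmax A
end
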